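/- Let φ, φ̃ ∈ L²(ℍ) have compact support, and suppose both {L_{(2k,l,m)}φ} and {L_{(2k,l,m)}φ̃} (k,l,m ∈ ℤ) are Riesz sequences. Then the reconstruction formula f = Σ_{k,l,m} ⟨f, L_{(2k,l,m)}φ̃⟩ L_{(2k,l,m)}φ holds for all f in the closed span V of {L_{(2k,l,m)}φ} if and only if ⟨φ, L_{(2k,l,m)}φ̃⟩ = δ_{(k,l,m),(0,0,0)} for all (k,l,m) ∈ ℤ³. -/

import Mathlib

open MeasureTheory

/-- Heisenberg group multiplication on ℝ³. -/
noncomputable def Hmul (a b : ℝ × ℝ × ℝ) : ℝ × ℝ × ℝ :=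
  (a.1 + b.1, a.2.1 + b.2.1, a.2.2 + b.2.2 + (b.1 * a.2.1 - b.2.1 * a.1) / 2)

/-- Heisenberg group inverse. -/
noncomputable def Hinv (a : ℝ × ℝ × ℝ) : ℝ × ℝ × ℝ := (-a.1, -a.2.1, -a.2.2)

/-- Left translation on the Heisenberg group. -/
noncomputable def LtrC (a : ℝ × ℝ × ℝ) (f : ℝ × ℝ × ℝ → ℂ) : ℝ × ℝ × ℝ → ℂ :=
  fun p => f (Hmul (Hinv a) p)

/-- The lattice translate L_{(2k,l,m)} g. -/
noncomputable def latTr (g : ℝ × ℝ × ℝ → ℂ) (j : ℤ × ℤ × ℤ) : ℝ × ℝ × ℝ → ℂ :=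
  LtrC ((2 * j.1 : ℝ), (j.2.1 : ℝ), (j.2.2 : ℝ)) g

/-- {L_{(2k,l,m)} g} is a Riesz sequence (with some bounds A, B > 0). -/
def IsRieszSeq (g : ℝ × ℝ × ℝ → ℂ) : Prop :=
  ∃ A B : ℝ, 0 < A ∧ 0 < B ∧
    ∀ (F : Finset (ℤ × ℤ × ℤ)) (c : ℤ × ℤ × ℤ → ℂ),
      A * ∑ j ∈ F, ‖c j‖ ^ 2 ≤
          (∫ p : ℝ × ℝ × ℝ, ‖∑ j ∈ F, c j * latTr g j p‖ ^ 2) ∧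
        (∫ p : ℝ × ℝ × ℝ, ‖∑ j ∈ F, c j * latTr g j p‖ ^ 2) ≤
          B * ∑ j ∈ F, ‖c j‖ ^ 2

/-- The L² inner product ⟨f, g⟩ = ∫ f ḡ. -/
noncomputable def innerH (f g : ℝ × ℝ × ℝ → ℂ) : ℂ :=
  ∫ p : ℝ × ℝ × ℝ, f p * (starRingEnd ℂ) (g p)

/-- f belongs to the closed span V of the lattice translates of φ (in the L² metric). -/
def InSpanV (φ f : ℝ × ℝ × ℝ → ℂ) : Prop :=
  ∀ ε > (0 : ℝ), ∃ (F : Finset (ℤ × ℤ × ℤ)) (c : ℤ × ℤ × ℤ → ℂ),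
    (∫ p : ℝ × ℝ × ℝ, ‖f p - ∑ j ∈ F, c j * latTr φ j p‖ ^ 2) < ε

/-- The reconstruction formula f = Σ ⟨f, L φ̃⟩ L φ, with unconditional L²-convergence. -/
def Reconstructs (φ φt f : ℝ × ℝ × ℝ → ℂ) : Prop :=
  ∀ ε > (0 : ℝ), ∃ F₀ : Finset (ℤ × ℤ × ℤ), ∀ F : Finset (ℤ × ℤ × ℤ), F₀ ⊆ F →
    (∫ p : ℝ × ℝ × ℝ,
        ‖f p - ∑ j ∈ F, innerH f (latTr φt j) * latTr φ j p‖ ^ 2) < ε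

/-!
Left translations of `ℍ` preserve Lebesgue measure, so
`⟨L_{j'} φ, L_j φ̃⟩ = ⟨φ, L_{j'⁻¹ j} φ̃⟩` and the biorthogonality condition on `φ` says exactly that
the families `{L_j φ}` and `{L_j φ̃}` are biorthogonal in `L²(ℍ)`.

If they are, the partial sums `x ↦ ∑_{j ∈ F} ⟨x, L_j φ̃⟩ L_j φ` are operators of norm at most
`√(B B̃)` (upper Riesz bound of `φ`, together with the Bessel inequality that the upper Riesz bound
of `φ̃` implies), and they reproduce every finite combination of the `L_j φ`. A uniformly bounded
family that converges to the identity on a dense set converges on its closure, i.e. on `V`.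
Conversely, the reconstruction formula for `f = φ` and the trivial expansion `φ = L_0 φ` are two
expansions of `φ` in the `L_j φ`; the lower Riesz bound makes the coefficients unique.
-/

open scoped InnerProductSpace

theorem hasSum_ite_eq_smul {R M ι : Type*} [Semiring R] [AddCommMonoid M] [Module R M]
    [TopologicalSpace M] [DecidableEq ι] (j : ι) (e : ι → M) :
    HasSum (fun i ↦ (if i = j then 1 else 0 : R) • e i) (e j) := by
  convert hasSum_ite_eq j (e j) using 2 with i
  split_ifs with h <;> simp [h]

section RieszBounds

variable (𝕜 : Type*) {E ι : Type*} [RCLike 𝕜] [NormedAddCommGroup E] [InnerProductSpace 𝕜 E]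

def HasUpperRieszBound (e : ι → E) (B : ℝ) : Prop :=
  ∀ (F : Finset ι) (c : ι → 𝕜), ‖∑ i ∈ F, c i • e i‖ ^ 2 ≤ B * ∑ i ∈ F, ‖c i‖ ^ 2

def HasLowerRieszBound (e : ι → E) (A : ℝ) : Prop :=
  ∀ (F : Finset ι) (c : ι → 𝕜), A * ∑ i ∈ F, ‖c i‖ ^ 2 ≤ ‖∑ i ∈ F, c i • e i‖ ^ 2

noncomputable def obliqueSum (e et : ι → E) (F : Finset ι) : E →L[𝕜] E :=
  ∑ i ∈ F, (innerSL 𝕜 (et i)).smulRight (e i)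

variable {𝕜} {e et : ι → E} {A B B' : ℝ}

theorem HasLowerRieszBound.eq_of_hasSum (h : HasLowerRieszBound 𝕜 e A) (hA : 0 < A)
    {c d : ι → 𝕜} {x : E} (hc : HasSum (fun i ↦ c i • e i) x)
    (hd : HasSum (fun i ↦ d i • e i) x) : c = d := by
  funext j
  have hsum : HasSum (fun i ↦ (c i - d i) • e i) 0 := by
    simpa only [sub_smul, sub_self] using hc.sub hd
  have hle : A * ‖c j - d j‖ ^ 2 ≤ 0 := by
    refine ge_of_tendsto (by simpa using hsum.norm.pow 2) ?_
    filter_upwards [Filter.eventually_ge_atTop {j}] with F hF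
    calc A * ‖c j - d j‖ ^ 2 ≤ A * ∑ i ∈ F, ‖c i - d i‖ ^ 2 := by
          gcongr
          exact Finset.single_le_sum (fun i _ ↦ sq_nonneg ‖c i - d i‖)
            (hF (Finset.mem_singleton_self j))
      _ ≤ _ := h F _
  have : ‖c j - d j‖ ^ 2 = 0 := le_antisymm (nonpos_of_mul_nonpos_right hle hA) (sq_nonneg _)
  rwa [sq_eq_zero_iff, norm_eq_zero, sub_eq_zero] at this

theorem HasUpperRieszBound.sum_norm_inner_sq_le (h : HasUpperRieszBound 𝕜 e B) (hB : 0 ≤ B)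
    (F : Finset ι) (x : E) : ∑ i ∈ F, ‖⟪e i, x⟫_𝕜‖ ^ 2 ≤ B * ‖x‖ ^ 2 := by
  set S := ∑ i ∈ F, ‖⟪e i, x⟫_𝕜‖ ^ 2
  set y := ∑ i ∈ F, ⟪e i, x⟫_𝕜 • e i
  have hS0 : 0 ≤ S := by positivity
  have hyx : ⟪y, x⟫_𝕜 = S := by
    simp only [y, S, sum_inner, inner_smul_left, RCLike.conj_mul]
    push_cast
    rfl
  have hSy : S ≤ ‖y‖ * ‖x‖ := by
    simpa [hyx, abs_of_nonneg hS0] using norm_inner_le_norm (𝕜 := 𝕜) y x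
  have hy : ‖y‖ ^ 2 ≤ B * S := h F _
  rcases hS0.eq_or_lt with hS | hS
  · rw [← hS]; positivity
  refine le_of_mul_le_mul_left ?_ hS
  calc S * S ≤ (‖y‖ * ‖x‖) * (‖y‖ * ‖x‖) := mul_self_le_mul_self hS0 hSy
    _ = ‖y‖ ^ 2 * ‖x‖ ^ 2 := by ring
    _ ≤ B * S * ‖x‖ ^ 2 := by gcongr
    _ = S * (B * ‖x‖ ^ 2) := by ring

theorem obliqueSum_apply (F : Finset ι) (x : E) :
    obliqueSum 𝕜 e et F x = ∑ i ∈ F, ⟪et i, x⟫_𝕜 • e i := by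
  simp [obliqueSum]

theorem norm_obliqueSum_apply_le (he : HasUpperRieszBound 𝕜 e B)
    (het : HasUpperRieszBound 𝕜 et B') (hB : 0 ≤ B) (hB' : 0 ≤ B') (F : Finset ι) (x : E) :
    ‖obliqueSum 𝕜 e et F x‖ ≤ √(B * B') * ‖x‖ := by
  rw [← Real.sqrt_sq (norm_nonneg x), ← Real.sqrt_mul (by positivity)]
  refine Real.le_sqrt_of_sq_le ?_
  calc ‖obliqueSum 𝕜 e et F x‖ ^ 2 ≤ B * ∑ i ∈ F, ‖⟪et i, x⟫_𝕜‖ ^ 2 := by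
        rw [obliqueSum_apply]; exact he F _
    _ ≤ B * (B' * ‖x‖ ^ 2) := by gcongr; exact het.sum_norm_inner_sq_le hB' F x
    _ = B * B' * ‖x‖ ^ 2 := by ring

theorem hasSum_inner_smul_of_mem_closure_span [DecidableEq ι]
    (hbi : ∀ i j, ⟪et i, e j⟫_𝕜 = if i = j then 1 else 0) (he : HasUpperRieszBound 𝕜 e B)
    (het : HasUpperRieszBound 𝕜 et B') (hB : 0 ≤ B) (hB' : 0 ≤ B') {x : E}
    (hx : x ∈ closure (Submodule.span 𝕜 (Set.range e) : Set E)) :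
    HasSum (fun i ↦ ⟪et i, x⟫_𝕜 • e i) x := by
  have hbdd : ∃ C ≥ 0, ∀ F x, ‖obliqueSum 𝕜 e et F x‖ ≤ C * ‖x‖ :=
    ⟨_, Real.sqrt_nonneg _, norm_obliqueSum_apply_le he het hB hB'⟩
  have hequi : Equicontinuous fun F ↦ (obliqueSum 𝕜 e et F : E → E) :=
    ((NormedSpace.equicontinuous_TFAE (obliqueSum 𝕜 e et)).out 4 1).mp hbdd
  have hclosed : IsClosed {x : E | HasSum (fun i ↦ ⟪et i, x⟫_𝕜 • e i) x} := by
    simpa only [HasSum, obliqueSum_apply, id_eq] using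
      hequi.isClosed_setOfPred_tendsto (f := id) continuous_id
  refine closure_minimal (fun y hy ↦ ?_) hclosed hx
  induction hy using Submodule.span_induction with
  | mem y hy =>
    obtain ⟨j, rfl⟩ := hy
    change HasSum _ (e j)
    simpa only [hbi] using hasSum_ite_eq_smul j e
  | zero => simp
  | add y z _ _ hy hz => simpa [inner_add_right, add_smul] using hy.add hz
  | smul a y _ hy => simpa [inner_smul_right, mul_smul] using hy.const_smul a

end RieszBounds

theorem integral_norm_sq_eq_norm_sq {α : Type*} [MeasurableSpace α] {μ : Measure α}
    {g : α → ℂ} {X : Lp ℂ 2 μ} (hg : g =ᵐ[μ] X) : ∫ a, ‖g a‖ ^ 2 ∂μ = ‖X‖ ^ 2 := by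
  rw [← inner_self_eq_norm_sq (𝕜 := ℂ), L2.inner_def, ← integral_re (L2.integrable_inner X X)]
  refine integral_congr_ae ?_
  filter_upwards [hg] with a ha
  simp [ha, ← Complex.ofReal_pow]

theorem coeFn_sum_smul_toLp {α ι : Type*} [MeasurableSpace α] {μ : Measure α}
    {g : ι → α → ℂ} (hg : ∀ i, MemLp (g i) 2 μ) (F : Finset ι) (c : ι → ℂ) :
    ⇑(∑ i ∈ F, c i • (hg i).toLp (g i)) =ᵐ[μ] fun a ↦ ∑ i ∈ F, c i * g i a := by
  have hterm : ∀ᵐ a ∂μ, ∀ i ∈ F, (c i • (hg i).toLp (g i) : Lp ℂ 2 μ) a = c i * g i a := by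
    rw [Filter.eventually_all_finset]
    intro i _
    filter_upwards [Lp.coeFn_smul (c i) ((hg i).toLp (g i)), (hg i).coeFn_toLp] with a h1 h2
    rw [h1, Pi.smul_apply, h2, smul_eq_mul]
  filter_upwards [Lp.coeFn_fun_finsetSum F (fun i ↦ c i • (hg i).toLp (g i)), hterm] with a h1 h2
  rw [h1]
  exact Finset.sum_congr rfl h2

section Heisenberg

local notation "ℍ" => ℝ × ℝ × ℝ

theorem Hmul_Hinv_Hmul (a p : ℍ) : Hmul (Hinv a) (Hmul a p) = p := by
  obtain ⟨x, y, z⟩ := p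
  simp only [Hmul, Hinv, Prod.mk.injEq]; exact ⟨by ring, by ring, by ring⟩

theorem Hmul_Hmul_Hinv (a p : ℍ) : Hmul a (Hmul (Hinv a) p) = p := by
  obtain ⟨x, y, z⟩ := p
  simp only [Hmul, Hinv, Prod.mk.injEq]; exact ⟨by ring, by ring, by ring⟩

noncomputable def homeomorphHmul (a : ℍ) : ℍ ≃ₜ ℍ where
  toFun := Hmul a
  invFun := Hmul (Hinv a)
  left_inv := Hmul_Hinv_Hmul a
  right_inv := Hmul_Hmul_Hinv a
  continuous_toFun := by unfold Hmul; fun_prop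
  continuous_invFun := by unfold Hmul; fun_prop

theorem measurePreserving_Hmul (a : ℍ) : MeasurePreserving (Hmul a) volume volume := by
  have hfiber (x : ℝ) : MeasurePreserving
      (fun q : ℝ × ℝ ↦ (a.2.1 + q.1, a.2.2 + q.2 + (x * a.2.1 - q.1 * a.1) / 2)) := by
    rw [Measure.volume_eq_prod]
    refine (measurePreserving_add_left volume a.2.1).skew_product
      (g := fun y z ↦ a.2.2 + z + (x * a.2.1 - y * a.1) / 2) (by fun_prop)
      (.of_forall fun y ↦ ?_)
    exact ((measurePreserving_add_right volume _).comp
      (measurePreserving_add_left volume a.2.2)).map_eq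
  rw [Measure.volume_eq_prod]
  exact (measurePreserving_add_left volume a.1).skew_product
    (g := fun (x : ℝ) (q : ℝ × ℝ) ↦ (a.2.1 + q.1, a.2.2 + q.2 + (x * a.2.1 - q.1 * a.1) / 2))
    (by fun_prop) (.of_forall fun x ↦ (hfiber x).map_eq)

theorem integral_comp_Hmul (a : ℍ) (f : ℍ → ℂ) : ∫ p, f (Hmul a p) = ∫ p, f p :=
  (measurePreserving_Hmul a).integral_comp (homeomorphHmul a).measurableEmbedding f

theorem MeasureTheory.MemLp.LtrC {f : ℍ → ℂ} (hf : MemLp f 2) (a : ℍ) : MemLp (LtrC a f) 2 :=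
  hf.comp_measurePreserving (measurePreserving_Hmul (Hinv a))

theorem innerH_LtrC_LtrC (a b : ℍ) (f g : ℍ → ℂ) :
    innerH (LtrC a f) (LtrC b g) = innerH f (LtrC (Hmul (Hinv a) b) g) := by
  have hshift (q : ℍ) : Hmul (Hinv b) (Hmul a q) = Hmul (Hinv (Hmul (Hinv a) b)) q := by
    simp only [Hmul, Hinv, Prod.mk.injEq]; constructor <;> [ring; constructor <;> ring]
  unfold innerH
  rw [← integral_comp_Hmul a]
  simp only [LtrC, Hmul_Hinv_Hmul, hshift]

noncomputable def latticePt (j : ℤ × ℤ × ℤ) : ℍ := (2 * j.1, j.2.1, j.2.2)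

def latticeInvMul (j' j : ℤ × ℤ × ℤ) : ℤ × ℤ × ℤ :=
  (j.1 - j'.1, j.2.1 - j'.2.1, j.2.2 - j'.2.2 + (j'.1 * j.2.1 - j'.2.1 * j.1))

theorem Hmul_Hinv_latticePt (j' j : ℤ × ℤ × ℤ) :
    Hmul (Hinv (latticePt j')) (latticePt j) = latticePt (latticeInvMul j' j) := by
  simp only [Hmul, Hinv, latticePt, latticeInvMul, Prod.mk.injEq]
  push_cast
  constructor <;> [ring; constructor <;> ring]

theorem latticeInvMul_eq_zero_iff {j' j : ℤ × ℤ × ℤ} : latticeInvMul j' j = 0 ↔ j = j' := by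
  obtain ⟨k', l', m'⟩ := j'
  obtain ⟨k, l, m⟩ := j
  simp only [latticeInvMul, ← Prod.mk_zero_zero, Prod.mk.injEq]
  constructor
  · rintro ⟨hk, hl, hm⟩
    obtain rfl : k = k' := by omega
    obtain rfl : l = l' := by omega
    exact ⟨rfl, rfl, by linarith [mul_comm k l]⟩
  · rintro ⟨rfl, rfl, rfl⟩
    exact ⟨sub_self k, sub_self l, by ring⟩

theorem latTr_eq_LtrC (g : ℍ → ℂ) (j : ℤ × ℤ × ℤ) : latTr g j = LtrC (latticePt j) g := rfl

theorem latTr_zero (g : ℍ → ℂ) : latTr g 0 = g := by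
  funext p
  simp [latTr, LtrC, Hmul, Hinv]

theorem innerH_latTr_latTr (f g : ℍ → ℂ) (j' j : ℤ × ℤ × ℤ) :
    innerH (latTr f j') (latTr g j) = innerH f (latTr g (latticeInvMul j' j)) := by
  simp only [latTr_eq_LtrC, innerH_LtrC_LtrC, Hmul_Hinv_latticePt]

theorem innerH_eq_inner {f g : ℍ → ℂ} (hf : MemLp f 2) (hg : MemLp g 2) :
    innerH f g = ⟪hg.toLp g, hf.toLp f⟫_ℂ := by
  rw [innerH, L2.inner_def]
  refine integral_congr_ae ?_
  filter_upwards [hf.coeFn_toLp, hg.coeFn_toLp] with p hfp hgp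
  simp [hfp, hgp]

theorem inSpanV_self (φ : ℍ → ℂ) : InSpanV φ φ := fun ε hε ↦
  ⟨{0}, fun _ ↦ 1, by simpa [latTr_zero] using hε⟩

section LatticeTranslatesInL2

theorem MeasureTheory.MemLp.latTr {φ : ℍ → ℂ} (hφ : MemLp φ 2) (j : ℤ × ℤ × ℤ) :
    MemLp (latTr φ j) 2 :=
  hφ.LtrC _

variable {φ : ℍ → ℂ} (hφ : MemLp φ 2)

noncomputable def latTrLp (j : ℤ × ℤ × ℤ) : Lp ℂ 2 (volume : Measure ℍ) :=
  (hφ.latTr j).toLp (latTr φ j)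

theorem latTrLp_zero : latTrLp hφ 0 = hφ.toLp φ :=
  MemLp.toLp_congr _ _ (by rw [latTr_zero])

theorem innerH_latTr_eq_inner {f : ℍ → ℂ} (hf : MemLp f 2 volume) (j : ℤ × ℤ × ℤ) :
    innerH f (latTr φ j) = ⟪latTrLp hφ j, hf.toLp f⟫_ℂ :=
  innerH_eq_inner hf (hφ.latTr j)

theorem inner_latTrLp_latTrLp {φt : ℍ → ℂ} (hφt : MemLp φt 2) (i j : ℤ × ℤ × ℤ) :
    ⟪latTrLp hφt i, latTrLp hφ j⟫_ℂ = innerH φ (latTr φt (latticeInvMul j i)) := by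
  rw [latTrLp, latTrLp, ← innerH_eq_inner, innerH_latTr_latTr]

theorem integral_norm_sum_latTr_sq (F : Finset (ℤ × ℤ × ℤ)) (c : ℤ × ℤ × ℤ → ℂ) :
    ∫ p, ‖∑ j ∈ F, c j * latTr φ j p‖ ^ 2 = ‖∑ j ∈ F, c j • latTrLp hφ j‖ ^ 2 :=
  integral_norm_sq_eq_norm_sq (coeFn_sum_smul_toLp hφ.latTr F c).symm

theorem integral_norm_sub_sum_latTr_sq {f : ℍ → ℂ} (hf : MemLp f 2 volume)
    (F : Finset (ℤ × ℤ × ℤ)) (c : ℤ × ℤ × ℤ → ℂ) :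
    ∫ p, ‖f p - ∑ j ∈ F, c j * latTr φ j p‖ ^ 2 =
      ‖hf.toLp f - ∑ j ∈ F, c j • latTrLp hφ j‖ ^ 2 := by
  refine integral_norm_sq_eq_norm_sq ?_
  filter_upwards [Lp.coeFn_sub (hf.toLp f) (∑ j ∈ F, c j • latTrLp hφ j), hf.coeFn_toLp,
    coeFn_sum_smul_toLp hφ.latTr F c] with p hsub hfp hsum
  rw [hsub, Pi.sub_apply, hfp]
  exact congrArg (f p - ·) hsum.symm

theorem IsRieszSeq.exists_bounds (hR : IsRieszSeq φ) : ∃ A B : ℝ, 0 < A ∧ 0 < B ∧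
    HasLowerRieszBound ℂ (latTrLp hφ) A ∧ HasUpperRieszBound ℂ (latTrLp hφ) B := by
  obtain ⟨A, B, hA, hB, hAB⟩ := hR
  refine ⟨A, B, hA, hB, fun F c ↦ ?_, fun F c ↦ ?_⟩
  · simpa only [integral_norm_sum_latTr_sq hφ] using (hAB F c).1
  · simpa only [integral_norm_sum_latTr_sq hφ] using (hAB F c).2

theorem mem_closure_span_of_inSpanV {f : ℍ → ℂ} (hf : MemLp f 2 volume) (hfV : InSpanV φ f) :
    hf.toLp f ∈ closure (Submodule.span ℂ (Set.range (latTrLp hφ)) : Set (Lp ℂ 2 volume)) := by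
  refine Metric.mem_closure_iff.2 fun ε hε ↦ ?_
  obtain ⟨F, c, hFc⟩ := hfV (ε ^ 2) (by positivity)
  refine ⟨∑ j ∈ F, c j • latTrLp hφ j,
    Submodule.sum_mem _ fun j _ ↦ Submodule.smul_mem _ _ (Submodule.subset_span ⟨j, rfl⟩), ?_⟩
  rw [integral_norm_sub_sum_latTr_sq hφ hf] at hFc
  rw [dist_eq_norm]
  exact lt_of_pow_lt_pow_left₀ 2 hε.le hFc

theorem reconstructs_iff_hasSum {φt f : ℍ → ℂ} (hφt : MemLp φt 2 volume)
    (hf : MemLp f 2 volume) :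
    Reconstructs φ φt f ↔
      HasSum (fun j ↦ ⟪latTrLp hφt j, hf.toLp f⟫_ℂ • latTrLp hφ j) (hf.toLp f) := by
  simp only [Reconstructs, HasSum, SummationFilter.unconditional_filter, Metric.tendsto_atTop,
    dist_eq_norm', ge_iff_le, innerH_latTr_eq_inner hφt hf, integral_norm_sub_sum_latTr_sq hφ hf]
  constructor
  · intro h ε hε
    obtain ⟨F₀, hF₀⟩ := h (ε ^ 2) (by positivity)
    exact ⟨F₀, fun F hF ↦ lt_of_pow_lt_pow_left₀ 2 hε.le (hF₀ F hF)⟩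
  · intro h ε hε
    obtain ⟨F₀, hF₀⟩ := h √ε (Real.sqrt_pos.2 hε)
    exact ⟨F₀, fun F hF ↦ (Real.lt_sqrt (norm_nonneg _)).1 (hF₀ F hF)⟩

end LatticeTranslatesInL2

end Heisenberg

theorem oblique_dual_characterization_general (φ φt : ℝ × ℝ × ℝ → ℂ)
    (hφ : MemLp φ 2 (volume : Measure (ℝ × ℝ × ℝ)))
    (hφt : MemLp φt 2 (volume : Measure (ℝ × ℝ × ℝ)))
    (hR : IsRieszSeq φ) (hRt : IsRieszSeq φt) :
    (∀ f : ℝ × ℝ × ℝ → ℂ,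
        MemLp f 2 (volume : Measure (ℝ × ℝ × ℝ)) → InSpanV φ f → Reconstructs φ φt f) ↔
      (∀ j : ℤ × ℤ × ℤ, innerH φ (latTr φt j) = if j = (0, 0, 0) then 1 else 0) := by
  obtain ⟨A, B, hA, hB, hlow, hup⟩ := hR.exists_bounds hφ
  obtain ⟨-, B', -, hB', -, hup'⟩ := hRt.exists_bounds hφt
  constructor
  · intro hrec
    have hexp : HasSum (fun j ↦ innerH φ (latTr φt j) • latTrLp hφ j) (latTrLp hφ 0) := by
      simpa only [latTrLp_zero, innerH_latTr_eq_inner hφt hφ] using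
        (reconstructs_iff_hasSum hφ hφt hφ).1 (hrec φ hφ (inSpanV_self φ))
    exact congrFun (hlow.eq_of_hasSum hA hexp (hasSum_ite_eq_smul 0 _))
  · intro hbi f hf hfV
    have hbiorth (i j : ℤ × ℤ × ℤ) :
        ⟪latTrLp hφt i, latTrLp hφ j⟫_ℂ = if i = j then 1 else 0 := by
      simp only [inner_latTrLp_latTrLp, hbi, Prod.mk_zero_zero, latticeInvMul_eq_zero_iff]
    exact (reconstructs_iff_hasSum hφ hφt hf).2 <| hasSum_inner_smul_of_mem_closure_span hbiorth
      hup hup' hB.le hB'.le (mem_closure_span_of_inSpanV hφ hf hfV)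

theorem oblique_dual_characterization (φ φt : ℝ × ℝ × ℝ → ℂ)
    (hφ : MemLp φ 2 (volume : Measure (ℝ × ℝ × ℝ)))
    (hφt : MemLp φt 2 (volume : Measure (ℝ × ℝ × ℝ)))
    (hφc : HasCompactSupport φ) (hφtc : HasCompactSupport φt)
    (hR : IsRieszSeq φ) (hRt : IsRieszSeq φt) :
    (∀ f : ℝ × ℝ × ℝ → ℂ,
        MemLp f 2 (volume : Measure (ℝ × ℝ × ℝ)) → InSpanV φ f → Reconstructs φ φt f) ↔
      (∀ j : ℤ × ℤ × ℤ, innerH φ (latTr φt j) = if j = (0, 0, 0) then 1 else 0) :=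
  oblique_dual_characterization_general φ φt hφ hφt hR hRt
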